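/- arXiv:2210.09041 — 4 statements merged into one kernel-verified Lean document; each statement's English description precedes it below -/
import Mathlib

section
/- Let J, m ≥ 1 and let v^(1), …, v^(m) ∈ ℝ^{2^J}. Then there exists a multi-channel deep convolutional network {h_j}_{j=1}^J with filter size 2 and stride 2 (linear, i.e., with biases chosen so the ReLU acts as the identity on the relevant range, or equivalently with linear activation), whose J-th layer has m channels, such that for all x ∈ ℝ^{2^J} and all ℓ = 1,…,m, the ℓ-th output channel h_J(x)_ℓ equals the inner product ⟨x, v^(ℓ)⟩. -/
open Finset

/-- zero-padded access to a finite vector: out-of-range entries are `0`. -/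
def padGet {d : ℕ} (x : Fin d → ℝ) (j : ℕ) : ℝ := if h : j < d then x ⟨j, h⟩ else 0

/-- stride-`t` convolution of `w ∈ ℝ^s` with a zero-padded signal (0-based indexing). -/
def convN (s t : ℕ) (w : Fin s → ℝ) (x : ℕ → ℝ) (i : ℕ) : ℝ :=
  ∑ k : Fin s, w k * x (i * t + k.val)

/-- a linear multi-channel 1D CNN: layer `j+1` has filter size `sz j`, stride `t j`, and
`n (j+1)` channels, each obtained by summing stride-`t j` convolutions of the `n j` channels
of layer `j` with filters `W j ℓ i ∈ ℝ^{sz j}` (linear activation).  Signals are `ℕ`-indexed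
with implicit zero padding; layer `0` repeats the input `x` in each of its channels. -/
def net (t sz n : ℕ → ℕ)
    (W : (j : ℕ) → Fin (n (j + 1)) → Fin (n j) → Fin (sz j) → ℝ)
    (x : ℕ → ℝ) : (j : ℕ) → Fin (n j) → ℕ → ℝ
  | 0 => fun _ => x
  | j + 1 => fun ℓ p => ∑ i : Fin (n j), convN (sz j) (t j) (W j ℓ i) (net t sz n W x j i) p

/-- padded access to the dictionary: `vp m J v ℓ k = v ℓ k` when in range, else `0`. -/
noncomputable def vp (m J : ℕ) (v : Fin m → Fin (2 ^ J) → ℝ) (ℓ k : ℕ) : ℝ :=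
  if hℓ : ℓ < m then padGet (v ⟨ℓ, hℓ⟩) k else 0

/-- channel counts: one input channel, `m * 2^(J-j)` channels at layer `j ≥ 1`. -/
def myn (J m : ℕ) (j : ℕ) : ℕ := if j = 0 then 1 else m * 2 ^ (J - j)

/-- the filter weights. -/
noncomputable def myW (J m : ℕ) (v : Fin m → Fin (2 ^ J) → ℝ) (j : ℕ)
    (c : Fin (myn J m (j + 1))) (i : Fin (myn J m j)) (k : Fin 2) : ℝ :=
  if j = 0 then vp m J v (c.val / 2 ^ (J - 1)) ((c.val % 2 ^ (J - 1)) * 2 + k.val)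
  else if i.val = (c.val / 2 ^ (J - (j + 1))) * 2 ^ (J - j)
                    + (c.val % 2 ^ (J - (j + 1))) * 2 + k.val then 1 else 0

lemma sum_ite_indicator {N : ℕ} (t : ℕ) (ht : t < N) (g : Fin N → ℝ) :
    (∑ i : Fin N, (if i.val = t then (1 : ℝ) else 0) * g i) = g ⟨t, ht⟩ := by
  rw [Finset.sum_eq_single (⟨t, ht⟩ : Fin N)]
  · simp
  · intro b _ hb
    have hbt : ¬ (b.val = t) := fun h => hb (Fin.ext h)
    simp [hbt]
  · simp

lemma decode_div {n ℓ q : ℕ} (hn : 0 < n) (hq : q < n) : (ℓ * n + q) / n = ℓ := by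
  rw [mul_comm, Nat.mul_add_div hn, Nat.div_eq_of_lt hq, add_zero]

lemma decode_mod {n ℓ q : ℕ} (hq : q < n) : (ℓ * n + q) % n = q := by
  rw [mul_comm, Nat.mul_add_mod, Nat.mod_eq_of_lt hq]

lemma key (J m : ℕ) (v : Fin m → Fin (2 ^ J) → ℝ) (x : Fin (2 ^ J) → ℝ) :
    ∀ j, 1 ≤ j → j ≤ J → ∀ ℓ q, ℓ < m → q < 2 ^ (J - j) →
      ∀ (c : Fin (myn J m j)), c.val = ℓ * 2 ^ (J - j) + q →
      net (fun _ => 2) (fun _ => 2) (myn J m) (myW J m v) (padGet x) j c q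
        = ∑ k ∈ range (2 ^ j), padGet x (q * 2 ^ j + k) * vp m J v ℓ (q * 2 ^ j + k) := by
  intro j
  induction j with
  | zero => omega
  | succ j ih =>
    intro _ hjJ ℓ q hℓ hq c hc
    rcases Nat.eq_zero_or_pos j with hj0 | hj1
    · -- base case : layer 1
      subst hj0
      have hpos : 0 < 2 ^ (J - 1) := Nat.pow_pos (by norm_num)
      have hc' : c.val = ℓ * 2 ^ (J - 1) + q := hc
      have hdiv : c.val / 2 ^ (J - 1) = ℓ := by rw [hc']; exact decode_div hpos hq
      have hmod : c.val % 2 ^ (J - 1) = q := by rw [hc']; exact decode_mod hq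
      show (∑ i : Fin (myn J m 0), convN 2 2 (myW J m v 0 c i)
          (net (fun _ => 2) (fun _ => 2) (myn J m) (myW J m v) (padGet x) 0 i) q) = _
      simp only [net, convN, myW, reduceIte, Fin.sum_univ_two, hdiv, hmod,
        Fin.val_zero, Fin.val_one]
      rw [Finset.sum_const, card_univ, Fintype.card_fin]
      have h1 : myn J m 0 = 1 := rfl
      rw [h1, one_smul]
      norm_num [Finset.sum_range_succ]
      ring
    · -- inductive step
      have hj0' : j ≠ 0 := by omega
      have hJj : J - j = (J - (j + 1)) + 1 := by omega
      have he1 : 1 ≤ 2 ^ (J - (j + 1)) := Nat.one_le_two_pow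
      have hpow : 2 ^ (J - j) = 2 ^ (J - (j + 1)) * 2 := by rw [hJj, pow_succ]
      have hdiv : c.val / 2 ^ (J - (j + 1)) = ℓ := by
        rw [hc]; exact decode_div (by omega) hq
      have hmod : c.val % 2 ^ (J - (j + 1)) = q := by rw [hc]; exact decode_mod hq
      have hN : myn J m j = m * 2 ^ (J - j) := by simp [myn, hj0']
      have hT : ∀ k : ℕ, k < 2 → ℓ * 2 ^ (J - j) + q * 2 + k < myn J m j := by
        intro k hk
        rw [hN, hpow]
        have hlin : q * 2 + k < 2 ^ (J - (j + 1)) * 2 := by omega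
        have hstep : ℓ * (2 ^ (J - (j + 1)) * 2) + (q * 2 + k)
            < (ℓ + 1) * (2 ^ (J - (j + 1)) * 2) := by
          have : (ℓ + 1) * (2 ^ (J - (j + 1)) * 2)
              = ℓ * (2 ^ (J - (j + 1)) * 2) + 2 ^ (J - (j + 1)) * 2 := by ring
          omega
        have hmul : (ℓ + 1) * (2 ^ (J - (j + 1)) * 2) ≤ m * (2 ^ (J - (j + 1)) * 2) :=
          Nat.mul_le_mul_right _ (by omega)
        have : ℓ * (2 ^ (J - (j + 1)) * 2) + (q * 2 + k) < m * (2 ^ (J - (j + 1)) * 2) := by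
          omega
        omega
      have hT0 := hT 0 (by norm_num)
      have hT1 := hT 1 (by norm_num)
      rw [add_zero] at hT0
      have hLHS : net (fun _ => 2) (fun _ => 2) (myn J m) (myW J m v) (padGet x) (j + 1) c q
          = net (fun _ => 2) (fun _ => 2) (myn J m) (myW J m v) (padGet x) j
              ⟨ℓ * 2 ^ (J - j) + q * 2, hT0⟩ (q * 2)
            + net (fun _ => 2) (fun _ => 2) (myn J m) (myW J m v) (padGet x) j
              ⟨ℓ * 2 ^ (J - j) + q * 2 + 1, hT1⟩ (q * 2 + 1) := by
        show (∑ i : Fin (myn J m j), convN 2 2 (myW J m v j c i)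
            (net (fun _ => 2) (fun _ => 2) (myn J m) (myW J m v) (padGet x) j i) q) = _
        simp only [convN, myW, if_neg hj0', Fin.sum_univ_two, hdiv, hmod,
          Fin.val_zero, Fin.val_one, add_zero]
        rw [Finset.sum_add_distrib,
          sum_ite_indicator _ hT0 _, sum_ite_indicator _ hT1 _]
      have hq2 : q * 2 < 2 ^ (J - j) := by rw [hpow]; omega
      have hq21 : q * 2 + 1 < 2 ^ (J - j) := by rw [hpow]; omega
      have hA := ih (by omega) (by omega) ℓ (q * 2) hℓ hq2
        ⟨ℓ * 2 ^ (J - j) + q * 2, hT0⟩ rfl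
      have hB := ih (by omega) (by omega) ℓ (q * 2 + 1) hℓ hq21
        ⟨ℓ * 2 ^ (J - j) + q * 2 + 1, hT1⟩ (by simp [add_assoc])
      have h2 : (2 : ℕ) ^ (j + 1) = 2 ^ j + 2 ^ j := by rw [pow_succ]; ring
      have hRHS : (∑ k ∈ range (2 ^ (j + 1)),
            padGet x (q * 2 ^ (j + 1) + k) * vp m J v ℓ (q * 2 ^ (j + 1) + k))
          = (∑ k ∈ range (2 ^ j),
              padGet x (q * 2 * 2 ^ j + k) * vp m J v ℓ (q * 2 * 2 ^ j + k))
            + ∑ k ∈ range (2 ^ j),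
              padGet x ((q * 2 + 1) * 2 ^ j + k) * vp m J v ℓ ((q * 2 + 1) * 2 ^ j + k) := by
        rw [h2, Finset.sum_range_add]
        congr 1
        · refine Finset.sum_congr rfl fun k _ => ?_
          have : q * (2 ^ j + 2 ^ j) + k = q * 2 * 2 ^ j + k := by ring
          rw [this]
        · refine Finset.sum_congr rfl fun k _ => ?_
          have : q * (2 ^ j + 2 ^ j) + (2 ^ j + k) = (q * 2 + 1) * 2 ^ j + k := by ring
          rw [this]
      rw [hLHS, hA, hB, hRHS]

/-- for any dictionary `v^{(1)},…,v^{(m)} ∈ ℝ^{2^J}` there is a linear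
multi-channel DCNN of depth `J`, all filters of size `2` and stride `2`, with one input
channel and `m` output channels, computing `h_J(x)_ℓ = ⟨x, v^{(ℓ)}⟩` for all `x ∈ ℝ^{2^J}`. -/
theorem stmt4 (J m : ℕ) (hJ : 1 ≤ J) (hm : 1 ≤ m) (v : Fin m → Fin (2 ^ J) → ℝ) :
    ∃ (n : ℕ → ℕ) (W : (j : ℕ) → Fin (n (j + 1)) → Fin (n j) → Fin 2 → ℝ)
      (h0 : n 0 = 1) (hJm : n J = m),
      ∀ (x : Fin (2 ^ J) → ℝ) (ℓ : Fin m),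
        net (fun _ => 2) (fun _ => 2) n W (padGet x) J (Fin.cast hJm.symm ℓ) 0
          = ∑ i, x i * v ℓ i := by
  have hJ0 : J ≠ 0 := by omega
  refine ⟨myn J m, myW J m v, rfl, by simp [myn, hJ0], fun x ℓ => ?_⟩
  have hkey := key J m v x J hJ le_rfl ℓ.val 0 ℓ.isLt
    (Nat.pow_pos (by norm_num))
    (Fin.cast (by simp [myn, hJ0] : myn J m J = m).symm ℓ) (by simp [Nat.sub_self])
  rw [hkey, ← Fin.sum_univ_eq_sum_range
    (fun k => padGet x (0 * 2 ^ J + k) * vp m J v ℓ.val (0 * 2 ^ J + k)) (2 ^ J)]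
  refine Finset.sum_congr rfl fun i _ => ?_
  simp [padGet, vp, i.isLt, ℓ.isLt, mul_comm]
end

section
/- Let d ≥ 1, n ≥ 1, 0 < δ < 1, and let ψ_δ be the ReLU bump function as above. For k ∈ Λ = {1,3,…,2⌈n/2⌉−1}^d define Ψ_δ(x; k) = σ(Σ_{i=1}^d ψ_δ(x_i − k_i/n) − d + 1). If x ∈ ℝ^d satisfies |x_i − k_i/n| ≤ (1−δ)/n for all i, then Ψ_δ(x; k) = 1; and if |x_i − k_i/n| ≥ 1/n for some i, then Ψ_δ(x; k) = 0. In particular, for distinct k, k' ∈ Λ, any point x with |x_i − k_i/n| ≤ (1−δ)/n for all i satisfies Ψ_δ(x; k') = 0. -/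
open Finset

/-- the ReLU activation `σ(u) = max(u,0)`. -/
def relu (u : ℝ) : ℝ := max u 0

/-- the piecewise-linear bump `ψ_δ` built from four ReLU units. -/
noncomputable def psi (n : ℕ) (δ : ℝ) (t : ℝ) : ℝ :=
  (n / δ) * (relu (t + 1 / n) - relu (t + 1 / n - δ / n)
    - relu (t - 1 / n + δ / n) + relu (t - 1 / n))

/-- `Ψ_δ(x; k) = σ(∑_{i=1}^d ψ_δ(x_i - k_i/n) - d + 1)`. -/
noncomputable def Psi (d n : ℕ) (δ : ℝ) (x : Fin d → ℝ) (k : Fin d → ℕ) : ℝ :=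
  relu ((∑ i, psi n δ (x i - (k i : ℝ) / n)) - d + 1)

/-- membership in the odd grid `Λ = {1, 3, …, 2⌈n/2⌉ - 1}^d`. -/
def memLambda (d n : ℕ) (k : Fin d → ℕ) : Prop :=
  ∀ i, k i % 2 = 1 ∧ 1 ≤ k i ∧ k i ≤ 2 * ((n + 1) / 2) - 1

lemma psi_eq_one (n : ℕ) (hn : 1 ≤ n) (δ : ℝ) (hδ0 : 0 < δ) (hδ1 : δ < 1) (t : ℝ)
    (ht : |t| ≤ (1 - δ) / n) : psi n δ t = 1 := by
  have hn' : (0:ℝ) < n := by exact_mod_cast hn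
  obtain ⟨ht1, ht2⟩ := abs_le.mp ht
  have hsplit : (1 - δ)/(n:ℝ) = 1/n - δ/n := by ring
  rw [hsplit] at ht1 ht2
  have hδn0 : 0 ≤ δ/(n:ℝ) := by positivity
  unfold psi relu
  rw [max_eq_left (by linarith), max_eq_left (by linarith),
      max_eq_right (by linarith), max_eq_right (by linarith)]
  field_simp
  ring

lemma psi_eq_zero (n : ℕ) (hn : 1 ≤ n) (δ : ℝ) (hδ0 : 0 < δ) (hδ1 : δ < 1) (t : ℝ)
    (ht : 1/(n:ℝ) ≤ |t|) : psi n δ t = 0 := by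
  have hn' : (0:ℝ) < n := by exact_mod_cast hn
  have hδn0 : 0 ≤ δ/(n:ℝ) := by positivity
  have hδ1n : δ/(n:ℝ) ≤ 1/n := by gcongr
  rcases le_abs.mp ht with h | h
  · unfold psi relu
    rw [max_eq_left (by linarith), max_eq_left (by linarith),
        max_eq_left (by linarith), max_eq_left (by linarith)]
    ring
  · unfold psi relu
    rw [max_eq_right (by linarith), max_eq_right (by linarith),
        max_eq_right (by linarith), max_eq_right (by linarith)]
    ring

lemma psi_le_one (n : ℕ) (hn : 1 ≤ n) (δ : ℝ) (hδ0 : 0 < δ) (hδ1 : δ < 1) (t : ℝ) :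
    psi n δ t ≤ 1 := by
  have hn' : (0:ℝ) < n := by exact_mod_cast hn
  have hδn0 : 0 < δ/(n:ℝ) := by positivity
  have hδ1n : δ/(n:ℝ) ≤ 1/n := by gcongr
  have hnd : 0 ≤ (n:ℝ)/δ := by positivity
  have hkey : (n:ℝ)/δ * (δ/n) = 1 := by field_simp
  rcases le_or_gt (|t|) ((1-δ)/n) with h | h
  · rw [psi_eq_one n hn δ hδ0 hδ1 t h]
  rcases le_or_gt (1/(n:ℝ)) (|t|) with h' | h'
  · rw [psi_eq_zero n hn δ hδ0 hδ1 t h']; norm_num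
  have hsplit : (1 - δ)/(n:ℝ) = 1/n - δ/n := by ring
  rw [hsplit] at h
  rw [abs_lt] at h'
  rcases lt_abs.mp h with h | h
  · unfold psi relu
    rw [max_eq_left (by linarith), max_eq_left (by linarith),
        max_eq_left (by linarith), max_eq_right (by linarith)]
    calc (n:ℝ)/δ * (t + 1/n - (t + 1/n - δ/n) - (t - 1/n + δ/n) + 0)
        = (n:ℝ)/δ * (1/n - t) := by ring
      _ ≤ (n:ℝ)/δ * (δ/n) := by apply mul_le_mul_of_nonneg_left (by linarith) hnd
      _ = 1 := hkey
  · unfold psi relu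
    rw [max_eq_left (by linarith), max_eq_right (by linarith),
        max_eq_right (by linarith), max_eq_right (by linarith)]
    calc (n:ℝ)/δ * (t + 1/n - 0 - 0 + 0)
        = (n:ℝ)/δ * (t + 1/n) := by ring
      _ ≤ (n:ℝ)/δ * (δ/n) := by apply mul_le_mul_of_nonneg_left (by linarith) hnd
      _ = 1 := hkey

/-- if `|x_i - k_i/n| ≤ (1-δ)/n` for all `i` then `Ψ_δ(x;k) = 1`; if
`|x_i - k_i/n| ≥ 1/n` for some `i` then `Ψ_δ(x;k) = 0`; and for distinct `k, k' ∈ Λ`, a point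
`x` with `|x_i - k_i/n| ≤ (1-δ)/n` for all `i` satisfies `Ψ_δ(x;k') = 0`. -/
theorem stmt11 (d n : ℕ) (hd : 1 ≤ d) (hn : 1 ≤ n) (δ : ℝ) (hδ0 : 0 < δ) (hδ1 : δ < 1)
    (k k' : Fin d → ℕ) (hk : memLambda d n k) (hk' : memLambda d n k') (x : Fin d → ℝ) :
    ((∀ i, |x i - (k i : ℝ) / n| ≤ (1 - δ) / n) → Psi d n δ x k = 1) ∧
    ((∃ i, (1 / n : ℝ) ≤ |x i - (k i : ℝ) / n|) → Psi d n δ x k = 0) ∧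
    (k ≠ k' → (∀ i, |x i - (k i : ℝ) / n| ≤ (1 - δ) / n) → Psi d n δ x k' = 0) := by
  have hn' : (0:ℝ) < n := by exact_mod_cast hn
  -- general vanishing lemma
  have hzero : ∀ (m : Fin d → ℕ), (∃ i, (1 / n : ℝ) ≤ |x i - (m i : ℝ) / n|) →
      Psi d n δ x m = 0 := by
    intro m ⟨i, hi⟩
    have hb : ∀ j ∈ Finset.univ, psi n δ (x j - (m j : ℝ) / n) ≤
        (if j = i then (0:ℝ) else 1) := by
      intro j _
      by_cases hj : j = i
      · subst hj
        rw [psi_eq_zero n hn δ hδ0 hδ1 _ hi, if_pos rfl]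
      · rw [if_neg hj]
        exact psi_le_one n hn δ hδ0 hδ1 _
    have hsum : (∑ j, psi n δ (x j - (m j : ℝ) / n)) ≤
        ∑ j, (if j = i then (0:ℝ) else 1) := Finset.sum_le_sum hb
    have hcount : (∑ j : Fin d, (if j = i then (0:ℝ) else 1)) = (d:ℝ) - 1 := by
      have : (∑ j : Fin d, (if j = i then (0:ℝ) else 1)) =
          ∑ j : Fin d, ((1:ℝ) - if j = i then 1 else 0) := by
        apply Finset.sum_congr rfl
        intro j _
        by_cases hj : j = i <;> simp [hj]
      rw [this, Finset.sum_sub_distrib]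
      simp [Finset.sum_ite_eq', Finset.card_univ]
    unfold Psi relu
    rw [max_eq_right (by rw [hcount] at hsum; linarith)]
  refine ⟨?_, hzero k, ?_⟩
  · intro hx
    have : (∑ i, psi n δ (x i - (k i : ℝ) / n)) = d := by
      rw [Finset.sum_congr rfl (fun i _ => psi_eq_one n hn δ hδ0 hδ1 _ (hx i))]
      simp
    unfold Psi relu
    rw [this]
    norm_num
  · intro hne hx
    apply hzero k'
    obtain ⟨i, hi⟩ := Function.ne_iff.mp hne
    refine ⟨i, ?_⟩
    have ho1 := (hk i).1
    have ho2 := (hk' i).1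
    have hab : (2:ℝ) ≤ |(k i : ℝ) - (k' i : ℝ)| := by
      have h2 : 2 ≤ (k i : ℤ) - k' i ∨ 2 ≤ (k' i : ℤ) - k i := by omega
      rcases h2 with h | h
      · exact le_abs.mpr (Or.inl (by exact_mod_cast h))
      · refine le_abs.mpr (Or.inr ?_)
        have : (2:ℝ) ≤ (k' i : ℝ) - k i := by exact_mod_cast h
        linarith
    set a := x i - (k i : ℝ) / n with ha
    set b := x i - (k' i : ℝ) / n with hb
    have hdiff : a - b = ((k' i : ℝ) - k i) / n := by rw [ha, hb]; ring
    have habs : |a - b| = |(k i : ℝ) - (k' i : ℝ)| / n := by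
      rw [hdiff, abs_div, abs_of_pos hn', abs_sub_comm]
    have h2n : 2 / (n:ℝ) ≤ |a - b| := by
      rw [habs]; gcongr
    have htri : |a - b| - |a| ≤ |b| := by
      have := abs_sub_abs_le_abs_sub (a - b) a
      simpa [abs_sub_comm] using this
    have hxa : |a| ≤ (1 - δ) / n := hx i
    have hsplit : (1 - δ)/(n:ℝ) = 1/n - δ/n := by ring
    have h2split : (2:ℝ)/(n:ℝ) = 1/n + 1/n := by ring
    have hδn0 : 0 ≤ δ/(n:ℝ) := by positivity
    have h1n0 : 0 < 1/(n:ℝ) := by positivity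
    rw [hsplit] at hxa
    rw [h2split] at h2n
    linarith
end

section
/- Let r ∈ ℝ^{2^{k+1}} be the concatenation (u⁽¹⁾, u⁽²⁾) with u⁽¹⁾ = Σ_{i=1}^{n} w_i^{(1)} r_i and u⁽²⁾ = Σ_{i=1}^{n} w_i^{(2)} r_i for r_i ∈ ℝ^{2^k}. Then for any M ≥ 1, Diag_M(r) = Σ_{i=1}^{n} Diag_M((w_i^{(1)}, w_i^{(2)})) · Diag_{2M}(r_i), where Diag_M(A) is the block-diagonal matrix with M copies of the row vector A. -/
open Finset

/-- entry `(i,j)` (0-based) of the block-diagonal matrix `Diag_M(a)` formed by `M` diagonal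
copies of the row vector `a ∈ ℝ^{1×p}`: row `i` carries `a` in columns `ip, …, ip+p-1`. -/
def diagEnt (p : ℕ) (a : Fin p → ℝ) (i j : ℕ) : ℝ :=
  if h : i * p ≤ j ∧ j - i * p < p then a ⟨j - i * p, h.2⟩ else 0

lemma diag2_eval (a b : ℝ) (i l : ℕ) :
    diagEnt 2 ![a, b] i l = if l = 2 * i then a else if l = 2 * i + 1 then b else 0 := by
  unfold diagEnt
  split_ifs with h h1 h2 h3 h4
  · have : l - i * 2 = 0 := by omega
    simp [this]
  · have : l - i * 2 = 1 := by omega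
    simp [this]
  · omega
  · omega
  · omega
  · rfl

/-- if `r = (u⁽¹⁾, u⁽²⁾) ∈ ℝ^{2^{k+1}}` with `u⁽¹⁾ = ∑ᵢ wᵢ⁽¹⁾ rᵢ`,
`u⁽²⁾ = ∑ᵢ wᵢ⁽²⁾ rᵢ` (`rᵢ ∈ ℝ^{2^k}`), then for any `M ≥ 1`,
`Diag_M(r) = ∑ᵢ Diag_M((wᵢ⁽¹⁾, wᵢ⁽²⁾)) · Diag_{2M}(rᵢ)`, entrywise (the matrix product
entry being a sum over the `2M` intermediate indices). -/
theorem stmt16 (k nn : ℕ) (u1 u2 : Fin (2 ^ k) → ℝ) (r : Fin (2 ^ (k + 1)) → ℝ)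
    (hr : ∀ p : ℕ, padGet r p = if p < 2 ^ k then padGet u1 p else padGet u2 (p - 2 ^ k))
    (w1 w2 : Fin nn → ℝ) (ri : Fin nn → Fin (2 ^ k) → ℝ)
    (hu1 : ∀ q, u1 q = ∑ i, w1 i * ri i q)
    (hu2 : ∀ q, u2 q = ∑ i, w2 i * ri i q) :
    ∀ M : ℕ, 1 ≤ M → ∀ i j : ℕ, i < M → j < M * 2 ^ (k + 1) →
      diagEnt (2 ^ (k + 1)) r i j
        = ∑ idx : Fin nn, ∑ l ∈ Finset.range (2 * M),
            diagEnt 2 ![w1 idx, w2 idx] i l * diagEnt (2 ^ k) (ri idx) l j := by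
  intro M hM i j hi hj
  have ha : 0 < 2 ^ k := Nat.pow_pos (by norm_num)
  have hpow : 2 ^ (k + 1) = 2 * 2 ^ k := by ring
  have e1 : i * 2 ^ (k + 1) = 2 * (i * 2 ^ k) := by ring
  have e2 : 2 * i * 2 ^ k = 2 * (i * 2 ^ k) := by ring
  have e3 : (2 * i + 1) * 2 ^ k = 2 * (i * 2 ^ k) + 2 ^ k := by ring
  have e4 : M * 2 ^ (k + 1) = 2 * (M * 2 ^ k) := by ring
  have e5 : (i + 1) * 2 ^ k ≤ M * 2 ^ k := Nat.mul_le_mul_right _ hi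
  have e6 : (i + 1) * 2 ^ k = i * 2 ^ k + 2 ^ k := by ring
  have hinner : ∀ idx : Fin nn,
      (∑ l ∈ Finset.range (2 * M), diagEnt 2 ![w1 idx, w2 idx] i l * diagEnt (2 ^ k) (ri idx) l j)
      = w1 idx * diagEnt (2 ^ k) (ri idx) (2 * i) j
        + w2 idx * diagEnt (2 ^ k) (ri idx) (2 * i + 1) j := by
    intro idx
    have hsub : ({2 * i, 2 * i + 1} : Finset ℕ) ⊆ Finset.range (2 * M) := by
      intro x hx
      simp only [Finset.mem_insert, Finset.mem_singleton] at hx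
      simp only [Finset.mem_range]
      omega
    rw [← Finset.sum_subset hsub]
    · rw [Finset.sum_insert (by simp), Finset.sum_singleton, diag2_eval, diag2_eval]
      simp
    · intro x _ hx
      simp only [Finset.mem_insert, Finset.mem_singleton, not_or] at hx
      rw [diag2_eval, if_neg hx.1, if_neg hx.2, zero_mul]
  simp only [hinner]
  rw [Finset.sum_add_distrib]
  -- now case split on j
  by_cases hc1 : i * 2 ^ (k + 1) ≤ j ∧ j - i * 2 ^ (k + 1) < 2 ^ k
  · -- first half: LHS = u1 d
    have hd : j - i * 2 ^ (k + 1) < 2 ^ (k + 1) := by omega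
    have hlhs : diagEnt (2 ^ (k + 1)) r i j = r ⟨j - i * 2 ^ (k + 1), hd⟩ := by
      unfold diagEnt; rw [dif_pos ⟨hc1.1, hd⟩]
    have hD1 : ∀ idx, diagEnt (2 ^ k) (ri idx) (2 * i) j
        = ri idx ⟨j - i * 2 ^ (k + 1), hc1.2⟩ := by
      intro idx
      unfold diagEnt
      have h1 : 2 * i * 2 ^ k ≤ j ∧ j - 2 * i * 2 ^ k < 2 ^ k := by
        constructor <;> omega
      rw [dif_pos h1]
      congr 1
      apply Fin.ext
      simp; omega
    have hD2 : ∀ idx, diagEnt (2 ^ k) (ri idx) (2 * i + 1) j = 0 := by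
      intro idx
      unfold diagEnt
      rw [dif_neg]
      intro h
      omega
    simp only [hD1, hD2, mul_zero, Finset.sum_const_zero, add_zero, hlhs]
    have := hr (j - i * 2 ^ (k + 1))
    rw [if_pos hc1.2] at this
    unfold padGet at this
    rw [dif_pos hd, dif_pos hc1.2] at this
    rw [this, hu1]
  · by_cases hc2 : (2 * i + 1) * 2 ^ k ≤ j ∧ j - i * 2 ^ (k + 1) < 2 ^ (k + 1)
    · -- second half
      have hd : j - i * 2 ^ (k + 1) < 2 ^ (k + 1) := hc2.2
      have hle : i * 2 ^ (k + 1) ≤ j := by omega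
      have hlhs : diagEnt (2 ^ (k + 1)) r i j = r ⟨j - i * 2 ^ (k + 1), hd⟩ := by
        unfold diagEnt; rw [dif_pos ⟨hle, hd⟩]
      have hlt2 : j - (2 * i + 1) * 2 ^ k < 2 ^ k := by omega
      have hD1 : ∀ idx, diagEnt (2 ^ k) (ri idx) (2 * i) j = 0 := by
        intro idx
        unfold diagEnt
        rw [dif_neg]
        intro h
        omega
      have hD2 : ∀ idx, diagEnt (2 ^ k) (ri idx) (2 * i + 1) j
          = ri idx ⟨j - (2 * i + 1) * 2 ^ k, hlt2⟩ := by
        intro idx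
        unfold diagEnt
        rw [dif_pos ⟨by omega, hlt2⟩]
      simp only [hD1, hD2, mul_zero, Finset.sum_const_zero, zero_add, hlhs]
      have := hr (j - i * 2 ^ (k + 1))
      rw [if_neg (by omega)] at this
      unfold padGet at this
      rw [dif_pos hd, dif_pos (show j - i * 2 ^ (k + 1) - 2 ^ k < 2 ^ k by omega)] at this
      rw [this, hu2]
      have heq : (⟨j - i * 2 ^ (k + 1) - 2 ^ k, by omega⟩ : Fin (2 ^ k))
          = ⟨j - (2 * i + 1) * 2 ^ k, hlt2⟩ := by
        apply Fin.ext; simp; omega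
      rw [heq]
    · -- both zero
      have hlhs : diagEnt (2 ^ (k + 1)) r i j = 0 := by
        unfold diagEnt
        rw [dif_neg]
        intro h
        omega
      have hD1 : ∀ idx, diagEnt (2 ^ k) (ri idx) (2 * i) j = 0 := by
        intro idx; unfold diagEnt; rw [dif_neg]; intro h; omega
      have hD2 : ∀ idx, diagEnt (2 ^ k) (ri idx) (2 * i + 1) j = 0 := by
        intro idx; unfold diagEnt; rw [dif_neg]; intro h; omega
      simp [hlhs, hD1, hD2]
end

section
/- Let Z₁,…,Z_T ⊆ ℝ^d be well-separated with centers z^(1),…,z^(T) and margin μ > 0, i.e., for x ∈ Z_{t₀} and t ≠ t₀: ‖x − z^(t)‖² − ‖x − z^(t₀)‖² ≥ μ. Define for each ordered pair (t,t') the two-ReLU unit g_{t,t'}(x) = σ((‖x − z^(t')‖² − ‖x − z^(t)‖²)/μ) − σ((‖x − z^(t')‖² − ‖x − z^(t)‖²)/μ − 1). Then for x ∈ Z_{t₀}: Σ_{t'≠t₀} g_{t₀,t'}(x) = T − 1, while for every t ≠ t₀: Σ_{t'≠t} g_{t,t'}(x) ≤ T − 2. -/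
open Finset

/-- the two-ReLU unit `g_{t,t'}(x) = σ((‖x-z^{(t')}‖² - ‖x-z^{(t)}‖²)/μ)
- σ((‖x-z^{(t')}‖² - ‖x-z^{(t)}‖²)/μ - 1)`. -/
noncomputable def gUnit {d T : ℕ} (z : Fin T → EuclideanSpace ℝ (Fin d)) (μ : ℝ)
    (t t' : Fin T) (x : EuclideanSpace ℝ (Fin d)) : ℝ :=
  relu ((‖x - z t'‖ ^ 2 - ‖x - z t‖ ^ 2) / μ)
    - relu ((‖x - z t'‖ ^ 2 - ‖x - z t‖ ^ 2) / μ - 1)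

/-- if the sets `Z₁,…,Z_T ⊆ ℝ^d` are well-separated with centers `z^{(t)}` and
margin `μ > 0`, then for `x ∈ Z_{t₀}`: `∑_{t'≠t₀} g_{t₀,t'}(x) = T - 1`, while
`∑_{t'≠t} g_{t,t'}(x) ≤ T - 2` for every `t ≠ t₀`. -/
theorem stmt17 (d T : ℕ) (hT : 2 ≤ T)
    (Z : Fin T → Set (EuclideanSpace ℝ (Fin d)))
    (z : Fin T → EuclideanSpace ℝ (Fin d)) (μ : ℝ) (hμ : 0 < μ)
    (hsep : ∀ t₀ t : Fin T, t ≠ t₀ → ∀ x ∈ Z t₀,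
      μ ≤ ‖x - z t‖ ^ 2 - ‖x - z t₀‖ ^ 2) :
    ∀ t₀ : Fin T, ∀ x ∈ Z t₀,
      (∑ t' ∈ Finset.univ.erase t₀, gUnit z μ t₀ t' x) = (T : ℝ) - 1 ∧
      ∀ t : Fin T, t ≠ t₀ →
        (∑ t' ∈ Finset.univ.erase t, gUnit z μ t t' x) ≤ (T : ℝ) - 2 := by
  intro t₀ x hx
  have gone : ∀ t t' : Fin T, 1 ≤ (‖x - z t'‖ ^ 2 - ‖x - z t‖ ^ 2) / μ →
      gUnit z μ t t' x = 1 := by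
    intro t t' h
    unfold gUnit relu
    rw [max_eq_left (by linarith), max_eq_left (by linarith)]
    ring
  have gzero : ∀ t t' : Fin T, (‖x - z t'‖ ^ 2 - ‖x - z t‖ ^ 2) / μ ≤ 0 →
      gUnit z μ t t' x = 0 := by
    intro t t' h
    unfold gUnit relu
    rw [max_eq_right (by linarith), max_eq_right (by linarith)]
    ring
  have gle : ∀ t t' : Fin T, gUnit z μ t t' x ≤ 1 := by
    intro t t'
    unfold gUnit relu
    rcases le_total ((‖x - z t'‖ ^ 2 - ‖x - z t‖ ^ 2) / μ) 1 with h | h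
    · have : max ((‖x - z t'‖ ^ 2 - ‖x - z t‖ ^ 2) / μ - 1) 0 = 0 :=
        max_eq_right (by linarith)
      rw [this]
      simp [max_le_iff, h]
    · have h2 : max ((‖x - z t'‖ ^ 2 - ‖x - z t‖ ^ 2) / μ) 0
          = (‖x - z t'‖ ^ 2 - ‖x - z t‖ ^ 2) / μ := max_eq_left (by linarith)
      rw [h2]
      have := le_max_left ((‖x - z t'‖ ^ 2 - ‖x - z t‖ ^ 2) / μ - 1) (0:ℝ)
      linarith
  have card_erase : ∀ t : Fin T, (Finset.univ.erase t).card = T - 1 := by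
    intro t; simp [Finset.card_erase_of_mem]
  constructor
  · rw [Finset.sum_congr rfl (fun t' ht' => gone t₀ t' ?_)]
    · rw [Finset.sum_const, card_erase, nsmul_eq_mul, mul_one]
      have : (1:ℕ) ≤ T := by omega
      push_cast [Nat.cast_sub this]
      ring
    · have ht'ne : t' ≠ t₀ := Finset.ne_of_mem_erase ht'
      have := hsep t₀ t' ht'ne x hx
      rw [le_div_iff₀ hμ]; linarith
  · intro t ht
    have ht₀mem : t₀ ∈ Finset.univ.erase t := by
      simp [Finset.mem_erase, ht.symm]
    have hbound : ∀ t' ∈ Finset.univ.erase t,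
        gUnit z μ t t' x ≤ if t' = t₀ then 0 else 1 := by
      intro t' _
      by_cases h : t' = t₀
      · subst h
        have h0 : gUnit z μ t t' x = 0 := gzero t t' (by
          have := hsep t' t ht x hx
          rw [div_nonpos_iff]; right; constructor <;> linarith)
        simp [h0]
      · simp only [if_neg h]; exact gle t t'
    calc ∑ t' ∈ Finset.univ.erase t, gUnit z μ t t' x
        ≤ ∑ t' ∈ Finset.univ.erase t, if t' = t₀ then (0:ℝ) else 1 :=
          Finset.sum_le_sum hbound
      _ = (T : ℝ) - 2 := by
          rw [← Finset.add_sum_erase _ _ ht₀mem, if_pos rfl, zero_add,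
            Finset.sum_congr rfl (fun t' ht' => if_neg (Finset.ne_of_mem_erase ht')),
            Finset.sum_const, Finset.card_erase_of_mem ht₀mem, card_erase,
            nsmul_eq_mul, mul_one]
          have h1 : T - 1 - 1 = T - 2 := by omega
          rw [h1, Nat.cast_sub hT]
          push_cast; ring
end
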